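/- Let (λ, φ_λ) be a left coaction of a quasi-Hopf algebra G on an algebra M with p_λ = φ_λ² S⁻¹(φ_λ¹ β) ⊗ φ_λ³ and q_λ = S(φ̄_λ¹)α φ̄_λ² ⊗ φ̄_λ³ as above, where q_λ = q_λ¹ ⊗ q_λ² and p_λ = p_λ¹ ⊗ p_λ². Then the 'rigidity' identities hold: λ(q_λ²)·p_λ·(S⁻¹(q_λ¹) ⊗ 1_M) = 1_G ⊗ 1_M and (S(p_λ¹) ⊗ 1_M)·q_λ·λ(p_λ²) = 1_G ⊗ 1_M. -/

import Mathlib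

open TensorProduct

set_option maxHeartbeats 1000000

noncomputable section

/-- A quasi-bialgebra structure (Drinfeld) on an algebra `G` over `ℂ`: algebra maps
`Δ : G → G ⊗ G` and `ε : G → ℂ`, together with an invertible reassociator
`φ ∈ G ⊗ G ⊗ G` satisfying quasi-coassociativity, the pentagon identity and the counit
axioms. -/
structure QuasiBialg (G : Type*) [Ring G] [Algebra ℂ G] where
  comul : G →ₐ[ℂ] G ⊗[ℂ] G
  counit : G →ₐ[ℂ] ℂ
  assocEl : G ⊗[ℂ] (G ⊗[ℂ] G)
  assocElInv : G ⊗[ℂ] (G ⊗[ℂ] G)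
  assocEl_mul_inv : assocEl * assocElInv = 1
  assocEl_inv_mul : assocElInv * assocEl = 1
  quasiCoassoc : ∀ a : G,
    TensorProduct.map LinearMap.id comul.toLinearMap (comul a) * assocEl =
      assocEl *
        (TensorProduct.assoc ℂ G G G)
          (TensorProduct.map comul.toLinearMap LinearMap.id (comul a))
  counit_comul_left : ∀ a : G,
    (TensorProduct.lid ℂ G)
      (TensorProduct.map counit.toLinearMap LinearMap.id (comul a)) = a
  counit_comul_right : ∀ a : G,
    (TensorProduct.rid ℂ G)
      (TensorProduct.map LinearMap.id counit.toLinearMap (comul a)) = a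
  counit_assocEl :
    TensorProduct.map LinearMap.id
        ((TensorProduct.lid ℂ G).toLinearMap ∘ₗ
          TensorProduct.map counit.toLinearMap LinearMap.id) assocEl =
      (1 : G ⊗[ℂ] G)
  pentagon :
    TensorProduct.map LinearMap.id
          (TensorProduct.map LinearMap.id comul.toLinearMap) assocEl *
        (TensorProduct.assoc ℂ G G (G ⊗[ℂ] G))
          (TensorProduct.map comul.toLinearMap LinearMap.id assocEl) =
      ((1 : G) ⊗ₜ[ℂ] assocEl) *
        TensorProduct.map LinearMap.id (TensorProduct.assoc ℂ G G G).toLinearMap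
          (TensorProduct.map LinearMap.id
            (TensorProduct.map comul.toLinearMap LinearMap.id) assocEl) *
        TensorProduct.map LinearMap.id (TensorProduct.assoc ℂ G G G).toLinearMap
          ((TensorProduct.assoc ℂ G (G ⊗[ℂ] G) G) (assocEl ⊗ₜ[ℂ] (1 : G)))

/-- A quasi-Hopf algebra structure (Drinfeld) on an algebra `G` over `ℂ`: a quasi-bialgebra
together with an invertible algebra antimorphism `S` and elements `α, β ∈ G` satisfying the
antipode axioms. -/
structure QuasiHopf (G : Type*) [Ring G] [Algebra ℂ G] extends QuasiBialg G where
  S : G →ₗ[ℂ] G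
  S_one : S 1 = 1
  S_mul : ∀ a b : G, S (a * b) = S b * S a
  Sinv : G →ₗ[ℂ] G
  Sinv_S : ∀ a : G, Sinv (S a) = a
  S_Sinv : ∀ a : G, S (Sinv a) = a
  alphaEl : G
  betaEl : G
  antipode_left : ∀ a : G,
    LinearMap.mul' ℂ G
        (TensorProduct.map (LinearMap.mulRight ℂ alphaEl ∘ₗ S) LinearMap.id (comul a)) =
      counit a • alphaEl
  antipode_right : ∀ a : G,
    LinearMap.mul' ℂ G
        (TensorProduct.map (LinearMap.mulRight ℂ betaEl) S (comul a)) =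
      counit a • betaEl
  antipode_assocEl :
    (LinearMap.mul' ℂ G ∘ₗ
        TensorProduct.map (LinearMap.mulRight ℂ betaEl)
          (LinearMap.mul' ℂ G ∘ₗ
            TensorProduct.map (LinearMap.mulRight ℂ alphaEl ∘ₗ S) LinearMap.id))
      assocEl = 1
  antipode_assocElInv :
    (LinearMap.mul' ℂ G ∘ₗ
        TensorProduct.map (LinearMap.mulRight ℂ alphaEl ∘ₗ S)
          (LinearMap.mul' ℂ G ∘ₗ
            TensorProduct.map (LinearMap.mulRight ℂ betaEl) S))
      assocElInv = 1

/-- A left coaction `(λ, φ_λ)` of a quasi-bialgebra `Q` on an algebra `M`: an algebra map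
`λ : M → G ⊗ M` with invertible reassociator `φ_λ ∈ G ⊗ G ⊗ M` satisfying the intertwining
relation, the mixed pentagon identity and the counit axioms. -/
structure LeftQCoaction (G M : Type*) [Ring G] [Algebra ℂ G] [Ring M] [Algebra ℂ M]
    (Q : QuasiBialg G) where
  lam : M →ₐ[ℂ] G ⊗[ℂ] M
  phiL : G ⊗[ℂ] (G ⊗[ℂ] M)
  phiLInv : G ⊗[ℂ] (G ⊗[ℂ] M)
  phiL_mul_inv : phiL * phiLInv = 1
  phiL_inv_mul : phiLInv * phiL = 1
  intertwine : ∀ m : M,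
    TensorProduct.map LinearMap.id lam.toLinearMap (lam m) * phiL =
      phiL *
        (TensorProduct.assoc ℂ G G M)
          (TensorProduct.map Q.comul.toLinearMap LinearMap.id (lam m))
  pentagon :
    ((1 : G) ⊗ₜ[ℂ] phiL) *
        TensorProduct.map LinearMap.id (TensorProduct.assoc ℂ G G M).toLinearMap
          (TensorProduct.map LinearMap.id
            (TensorProduct.map Q.comul.toLinearMap LinearMap.id) phiL) *
        TensorProduct.map LinearMap.id (TensorProduct.assoc ℂ G G M).toLinearMap
          ((TensorProduct.assoc ℂ G (G ⊗[ℂ] G) M) (Q.assocEl ⊗ₜ[ℂ] (1 : M))) =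
      TensorProduct.map LinearMap.id
          (TensorProduct.map LinearMap.id lam.toLinearMap) phiL *
        (TensorProduct.assoc ℂ G G (G ⊗[ℂ] M))
          (TensorProduct.map Q.comul.toLinearMap LinearMap.id phiL)
  counit_lam : ∀ m : M,
    (TensorProduct.lid ℂ M)
      (TensorProduct.map Q.counit.toLinearMap LinearMap.id (lam m)) = m
  counit_phiL_mid :
    TensorProduct.map LinearMap.id
        ((TensorProduct.lid ℂ M).toLinearMap ∘ₗ
          TensorProduct.map Q.counit.toLinearMap LinearMap.id) phiL =
      (1 : G ⊗[ℂ] M)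
  counit_phiL_left :
    (TensorProduct.lid ℂ (G ⊗[ℂ] M))
        (TensorProduct.map Q.counit.toLinearMap LinearMap.id phiL) =
      (1 : G ⊗[ℂ] M)

variable {G M : Type*} [Ring G] [Algebra ℂ G] [Ring M] [Algebra ℂ M]

/-- The element `p_λ = φ_λ² S⁻¹(φ_λ¹ β) ⊗ φ_λ³ ∈ G ⊗ M`. -/
def pLam (Q : QuasiHopf G) (L : LeftQCoaction G M Q.toQuasiBialg) : G ⊗[ℂ] M :=
  TensorProduct.map
    (LinearMap.mul' ℂ G ∘ₗ
      TensorProduct.map LinearMap.id (Q.Sinv ∘ₗ LinearMap.mulRight ℂ Q.betaEl) ∘ₗ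
      (TensorProduct.comm ℂ G G).toLinearMap)
    LinearMap.id ((TensorProduct.assoc ℂ G G M).symm L.phiL)

/-- The element `q_λ = S(φ̄_λ¹) α φ̄_λ² ⊗ φ̄_λ³ ∈ G ⊗ M`. -/
def qLam (Q : QuasiHopf G) (L : LeftQCoaction G M Q.toQuasiBialg) : G ⊗[ℂ] M :=
  TensorProduct.map
    (LinearMap.mul' ℂ G ∘ₗ
      TensorProduct.map (LinearMap.mulRight ℂ Q.alphaEl ∘ₗ Q.S) LinearMap.id)
    LinearMap.id ((TensorProduct.assoc ℂ G G M).symm L.phiLInv)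

/-- For `x ⊗ n ∈ G ⊗ M`, the element `λ(n)·t·(S⁻¹(x) ⊗ 1_M) ∈ G ⊗ M` (summation extended
bilinearly); used to express `λ(m₍₀₎)·p_λ·(S⁻¹(m₍₋₁₎) ⊗ 1_M)`. -/
def thetaP (Q : QuasiHopf G) (L : LeftQCoaction G M Q.toQuasiBialg) (t : G ⊗[ℂ] M) :
    G ⊗[ℂ] M →ₗ[ℂ] G ⊗[ℂ] M :=
  TensorProduct.lift (LinearMap.mul ℂ (G ⊗[ℂ] M) ∘ₗ LinearMap.mulRight ℂ t) ∘ₗ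
    TensorProduct.map L.lam.toLinearMap
      ((TensorProduct.mk ℂ G M).flip (1 : M) ∘ₗ Q.Sinv) ∘ₗ
    (TensorProduct.comm ℂ G M).toLinearMap

/-- For `x ⊗ n ∈ G ⊗ M`, the element `(S(x) ⊗ 1_M)·t·λ(n) ∈ G ⊗ M` (summation extended
bilinearly); used to express `(S(m₍₋₁₎) ⊗ 1_M)·q_λ·λ(m₍₀₎)`. -/
def thetaQ (Q : QuasiHopf G) (L : LeftQCoaction G M Q.toQuasiBialg) (t : G ⊗[ℂ] M) :
    G ⊗[ℂ] M →ₗ[ℂ] G ⊗[ℂ] M :=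
  TensorProduct.lift (LinearMap.mul ℂ (G ⊗[ℂ] M) ∘ₗ LinearMap.mulRight ℂ t) ∘ₗ
    TensorProduct.map ((TensorProduct.mk ℂ G M).flip (1 : M) ∘ₗ Q.S) L.lam.toLinearMap

set_option synthInstance.maxHeartbeats 1000000
set_option maxRecDepth 4000

namespace St16

lemma Sinv_mul (Q : QuasiHopf G) (x y : G) : Q.Sinv (x * y) = Q.Sinv y * Q.Sinv x := by
  have h : x * y = Q.S (Q.Sinv y * Q.Sinv x) := by rw [Q.S_mul, Q.S_Sinv, Q.S_Sinv]
  rw [h, Q.Sinv_S]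

lemma Sinv_one (Q : QuasiHopf G) : Q.Sinv 1 = 1 := by
  have := Q.Sinv_S 1
  rwa [Q.S_one] at this

def mk3 {A B C D : Type*} [AddCommMonoid A] [AddCommMonoid B] [AddCommMonoid C]
    [AddCommMonoid D] [Module ℂ A] [Module ℂ B] [Module ℂ C] [Module ℂ D]
    (f : A →ₗ[ℂ] B →ₗ[ℂ] C →ₗ[ℂ] D) : A ⊗[ℂ] (B ⊗[ℂ] C) →ₗ[ℂ] D :=
  TensorProduct.lift ((TensorProduct.uncurry (RingHom.id ℂ) B C D) ∘ₗ f)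

@[simp] lemma mk3_tmul {A B C D : Type*} [AddCommMonoid A] [AddCommMonoid B] [AddCommMonoid C]
    [AddCommMonoid D] [Module ℂ A] [Module ℂ B] [Module ℂ C] [Module ℂ D]
    (f : A →ₗ[ℂ] B →ₗ[ℂ] C →ₗ[ℂ] D) (a : A) (b : B) (c : C) :
    mk3 f (a ⊗ₜ (b ⊗ₜ c)) = f a b c := by
  simp [mk3]

/-- `Tg u (a ⊗ (b ⊗ s)) = (s*u) * ((S⁻¹ b * S⁻¹ α * a) ⊗ 1)` -/
def Tg (Q : QuasiHopf G) (u : G ⊗[ℂ] M) :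
    G ⊗[ℂ] (G ⊗[ℂ] (G ⊗[ℂ] M)) →ₗ[ℂ] G ⊗[ℂ] M :=
  mk3 (LinearMap.mk₂ ℂ
    (fun a b => LinearMap.mulRight ℂ ((Q.Sinv b * Q.Sinv Q.alphaEl * a) ⊗ₜ[ℂ] (1 : M)) ∘ₗ
      LinearMap.mulRight ℂ u)
    (by intros; ext; simp [mul_add, add_mul, add_tmul, tmul_add, map_add, map_smul, ← smul_tmul', mul_smul_comm, smul_mul_assoc, mul_assoc]) (by intros; ext; simp [mul_add, add_mul, add_tmul, tmul_add, map_add, map_smul, ← smul_tmul', mul_smul_comm, smul_mul_assoc, mul_assoc]) (by intros; ext; simp [mul_add, add_mul, add_tmul, tmul_add, map_add, map_smul, ← smul_tmul', mul_smul_comm, smul_mul_assoc, mul_assoc]) (by intros; ext; simp [mul_add, add_mul, add_tmul, tmul_add, map_add, map_smul, ← smul_tmul', mul_smul_comm, smul_mul_assoc, mul_assoc]))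

@[simp] lemma Tg_tmul (Q : QuasiHopf G) (u : G ⊗[ℂ] M) (a b : G) (s : G ⊗[ℂ] M) :
    Tg Q u (a ⊗ₜ (b ⊗ₜ s)) = s * u * ((Q.Sinv b * Q.Sinv Q.alphaEl * a) ⊗ₜ[ℂ] (1 : M)) := by
  simp [Tg]

/-- `T'g u (a ⊗ (b ⊗ s)) = ((a*β*S b) ⊗ 1) * u * s` -/
def T'g (Q : QuasiHopf G) (u : G ⊗[ℂ] M) :
    G ⊗[ℂ] (G ⊗[ℂ] (G ⊗[ℂ] M)) →ₗ[ℂ] G ⊗[ℂ] M :=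
  mk3 (LinearMap.mk₂ ℂ
    (fun a b => LinearMap.mulLeft ℂ (((a * Q.betaEl * Q.S b) ⊗ₜ[ℂ] (1 : M)) * u))
    (by intros; ext; simp [mul_add, add_mul, add_tmul, tmul_add, map_add, map_smul, ← smul_tmul', mul_smul_comm, smul_mul_assoc, mul_assoc]) (by intros; ext; simp [mul_add, add_mul, add_tmul, tmul_add, map_add, map_smul, ← smul_tmul', mul_smul_comm, smul_mul_assoc, mul_assoc]) (by intros; ext; simp [mul_add, add_mul, add_tmul, tmul_add, map_add, map_smul, ← smul_tmul', mul_smul_comm, smul_mul_assoc, mul_assoc]) (by intros; ext; simp [mul_add, add_mul, add_tmul, tmul_add, map_add, map_smul, ← smul_tmul', mul_smul_comm, smul_mul_assoc, mul_assoc]))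

@[simp] lemma T'g_tmul (Q : QuasiHopf G) (u : G ⊗[ℂ] M) (a b : G) (s : G ⊗[ℂ] M) :
    T'g Q u (a ⊗ₜ (b ⊗ₜ s)) = ((a * Q.betaEl * Q.S b) ⊗ₜ[ℂ] (1 : M)) * u * s := by
  simp [T'g, mul_assoc]

@[simp] lemma mul_add_A2 (x y z : G ⊗[ℂ] M) : x * (y + z) = x * y + x * z := mul_add x y z
@[simp] lemma add_mul_A2 (x y z : G ⊗[ℂ] M) : (x + y) * z = x * z + y * z := add_mul x y z
@[simp] lemma mul_zero_A2 (x : G ⊗[ℂ] M) : x * 0 = 0 := mul_zero x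
@[simp] lemma zero_mul_A2 (x : G ⊗[ℂ] M) : 0 * x = 0 := zero_mul x
@[simp] lemma mul_add_A3 (x y z : G ⊗[ℂ] (G ⊗[ℂ] M)) : x * (y + z) = x * y + x * z := mul_add x y z
@[simp] lemma add_mul_A3 (x y z : G ⊗[ℂ] (G ⊗[ℂ] M)) : (x + y) * z = x * z + y * z := add_mul x y z
@[simp] lemma mul_zero_A3 (x : G ⊗[ℂ] (G ⊗[ℂ] M)) : x * 0 = 0 := mul_zero x
@[simp] lemma zero_mul_A3 (x : G ⊗[ℂ] (G ⊗[ℂ] M)) : 0 * x = 0 := zero_mul x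
@[simp] lemma mul_add_A4 (x y z : G ⊗[ℂ] (G ⊗[ℂ] (G ⊗[ℂ] M))) : x * (y + z) = x * y + x * z := by
  have h := map_add (LinearMap.mulLeft ℂ x) y z
  simpa using h
@[simp] lemma add_mul_A4 (x y z : G ⊗[ℂ] (G ⊗[ℂ] (G ⊗[ℂ] M))) : (x + y) * z = x * z + y * z := by
  have h := map_add (LinearMap.mulRight ℂ z) x y
  simpa using h
@[simp] lemma mul_zero_A4 (x : G ⊗[ℂ] (G ⊗[ℂ] (G ⊗[ℂ] M))) : x * 0 = 0 := mul_zero x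
@[simp] lemma zero_mul_A4 (x : G ⊗[ℂ] (G ⊗[ℂ] (G ⊗[ℂ] M))) : 0 * x = 0 := zero_mul x
@[simp] lemma smul_mul_A4 (c : ℂ) (x y : G ⊗[ℂ] (G ⊗[ℂ] (G ⊗[ℂ] M))) :
    (c • x) * y = c • (x * y) := smul_mul_assoc c x y
@[simp] lemma mul_smul_A4 (c : ℂ) (x y : G ⊗[ℂ] (G ⊗[ℂ] (G ⊗[ℂ] M))) :
    x * (c • y) = c • (x * y) := mul_smul_comm c x y
@[simp] lemma smul_mul_A2 (c : ℂ) (x y : G ⊗[ℂ] M) :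
    (c • x) * y = c • (x * y) := smul_mul_assoc c x y
@[simp] lemma mul_smul_A2 (c : ℂ) (x y : G ⊗[ℂ] M) :
    x * (c • y) = c • (x * y) := mul_smul_comm c x y
-- κ maps and their comultiplication identities

def k1 (Q : QuasiHopf G) : G ⊗[ℂ] G →ₗ[ℂ] G :=
  TensorProduct.lift (LinearMap.mk₂ ℂ
    (fun x y => Q.Sinv y * Q.Sinv Q.alphaEl * x)
    (by intros; simp [mul_add])
    (by intros; simp [mul_smul_comm])
    (by intros; simp [map_add, add_mul])
    (by intros; simp [map_smul, smul_mul_assoc]))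

@[simp] lemma k1_tmul (Q : QuasiHopf G) (x y : G) :
    k1 Q (x ⊗ₜ y) = Q.Sinv y * Q.Sinv Q.alphaEl * x := by simp [k1]

lemma k1_comul (Q : QuasiHopf G) (a : G) :
    k1 Q (Q.comul a) = Q.counit a • Q.Sinv Q.alphaEl := by
  have h : k1 Q = Q.Sinv ∘ₗ (LinearMap.mul' ℂ G ∘ₗ
      TensorProduct.map (LinearMap.mulRight ℂ Q.alphaEl ∘ₗ Q.S) LinearMap.id) := by
    apply TensorProduct.ext'
    intro x y
    simp [Sinv_mul, Q.Sinv_S, mul_assoc]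
  rw [h]
  simp only [LinearMap.comp_apply]
  rw [Q.antipode_left a, map_smul]

def k2 (Q : QuasiHopf G) : G ⊗[ℂ] G →ₗ[ℂ] G :=
  TensorProduct.lift (LinearMap.mk₂ ℂ
    (fun x y => y * Q.Sinv Q.betaEl * Q.Sinv x)
    (by intros; simp [map_add, mul_add])
    (by intros; simp [map_smul, mul_smul_comm])
    (by intros; simp [add_mul])
    (by intros; simp [smul_mul_assoc]))

@[simp] lemma k2_tmul (Q : QuasiHopf G) (x y : G) :
    k2 Q (x ⊗ₜ y) = y * Q.Sinv Q.betaEl * Q.Sinv x := by simp [k2]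

lemma k2_comul (Q : QuasiHopf G) (a : G) :
    k2 Q (Q.comul a) = Q.counit a • Q.Sinv Q.betaEl := by
  have h : k2 Q = Q.Sinv ∘ₗ (LinearMap.mul' ℂ G ∘ₗ
      TensorProduct.map (LinearMap.mulRight ℂ Q.betaEl) Q.S) := by
    apply TensorProduct.ext'
    intro x y
    simp [Sinv_mul, Q.Sinv_S, mul_assoc]
  rw [h]
  simp only [LinearMap.comp_apply]
  rw [Q.antipode_right a, map_smul]

def k3 (Q : QuasiHopf G) : G ⊗[ℂ] (G ⊗[ℂ] G) →ₗ[ℂ] G :=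
  mk3 (LinearMap.mk₂ ℂ
    (fun x y => LinearMap.mulRight ℂ (Q.Sinv Q.betaEl * Q.Sinv y * Q.Sinv Q.alphaEl * x))
    (by intros; ext; simp [mul_add, mul_assoc])
    (by intros; ext; simp [mul_smul_comm, mul_assoc])
    (by intros; ext; simp [map_add, mul_add, add_mul, mul_assoc])
    (by intros; ext; simp [map_smul, mul_smul_comm, smul_mul_assoc, mul_assoc]))

@[simp] lemma k3_tmul (Q : QuasiHopf G) (x y z : G) :
    k3 Q (x ⊗ₜ (y ⊗ₜ z)) = z * (Q.Sinv Q.betaEl * Q.Sinv y * Q.Sinv Q.alphaEl * x) := by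
  simp [k3, mul_assoc]

lemma k3_assocElInv (Q : QuasiHopf G) : k3 Q Q.assocElInv = 1 := by
  have h : k3 Q = Q.Sinv ∘ₗ (LinearMap.mul' ℂ G ∘ₗ
      TensorProduct.map (LinearMap.mulRight ℂ Q.alphaEl ∘ₗ Q.S)
        (LinearMap.mul' ℂ G ∘ₗ
          TensorProduct.map (LinearMap.mulRight ℂ Q.betaEl) Q.S)) := by
    apply TensorProduct.ext'
    intro x w
    induction w using TensorProduct.induction_on with
    | zero => simp
    | tmul y z => simp [Sinv_mul, Q.Sinv_S, mul_assoc]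
    | add w1 w2 h1 h2 => simp only [tmul_add, map_add, h1, h2]
  rw [h, LinearMap.comp_apply, Q.antipode_assocElInv, Sinv_one]

def k4 (Q : QuasiHopf G) : G ⊗[ℂ] (G ⊗[ℂ] G) →ₗ[ℂ] G :=
  LinearMap.mul' ℂ G ∘ₗ
    TensorProduct.map (LinearMap.mulRight ℂ Q.betaEl)
      (LinearMap.mul' ℂ G ∘ₗ
        TensorProduct.map (LinearMap.mulRight ℂ Q.alphaEl ∘ₗ Q.S) LinearMap.id)

@[simp] lemma k4_tmul (Q : QuasiHopf G) (x y z : G) :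
    k4 Q (x ⊗ₜ (y ⊗ₜ z)) = (x * Q.betaEl) * ((Q.S y * Q.alphaEl) * z) := by
  simp [k4]

lemma k4_assocEl (Q : QuasiHopf G) : k4 Q Q.assocEl = 1 := Q.antipode_assocEl

def k5 (Q : QuasiHopf G) : G ⊗[ℂ] G →ₗ[ℂ] G :=
  LinearMap.mul' ℂ G ∘ₗ
    TensorProduct.map (LinearMap.mulRight ℂ Q.alphaEl ∘ₗ Q.S) LinearMap.id

@[simp] lemma k5_tmul (Q : QuasiHopf G) (x y : G) :
    k5 Q (x ⊗ₜ y) = (Q.S x * Q.alphaEl) * y := by simp [k5]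

lemma k5_comul (Q : QuasiHopf G) (a : G) :
    k5 Q (Q.comul a) = Q.counit a • Q.alphaEl := Q.antipode_left a

def k6 (Q : QuasiHopf G) : G ⊗[ℂ] G →ₗ[ℂ] G :=
  LinearMap.mul' ℂ G ∘ₗ
    TensorProduct.map (LinearMap.mulRight ℂ Q.betaEl) Q.S

@[simp] lemma k6_tmul (Q : QuasiHopf G) (x y : G) :
    k6 Q (x ⊗ₜ y) = (x * Q.betaEl) * Q.S y := by simp [k6]

lemma k6_comul (Q : QuasiHopf G) (a : G) :
    k6 Q (Q.comul a) = Q.counit a • Q.betaEl := Q.antipode_right a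
-- elementary h-maps

/-- `h1 (a ⊗ s) = (s * p) * (S⁻¹ a ⊗ 1)` -/
def h1 (Q : QuasiHopf G) (L : LeftQCoaction G M Q.toQuasiBialg) :
    G ⊗[ℂ] (G ⊗[ℂ] M) →ₗ[ℂ] G ⊗[ℂ] M :=
  TensorProduct.lift (LinearMap.mk₂ ℂ
    (fun a s => s * pLam Q L * ((Q.Sinv a) ⊗ₜ[ℂ] (1 : M)))
    (by intros; simp [map_add, add_tmul, mul_add])
    (by intros; simp [map_smul, ← smul_tmul', mul_smul_comm])
    (by intros; simp [add_mul])
    (by intros; simp [smul_mul_assoc]))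

@[simp] lemma h1_tmul (Q : QuasiHopf G) (L : LeftQCoaction G M Q.toQuasiBialg)
    (a : G) (s : G ⊗[ℂ] M) :
    h1 Q L (a ⊗ₜ s) = s * pLam Q L * ((Q.Sinv a) ⊗ₜ[ℂ] (1 : M)) := by simp [h1]

/-- `h2 (a ⊗ s) = ((S a) ⊗ 1) * q * s` -/
def h2 (Q : QuasiHopf G) (L : LeftQCoaction G M Q.toQuasiBialg) :
    G ⊗[ℂ] (G ⊗[ℂ] M) →ₗ[ℂ] G ⊗[ℂ] M :=
  TensorProduct.lift (LinearMap.mk₂ ℂ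
    (fun a s => ((Q.S a) ⊗ₜ[ℂ] (1 : M)) * qLam Q L * s)
    (by intros; simp [map_add, add_tmul, add_mul])
    (by intros; simp [map_smul, ← smul_tmul', smul_mul_assoc])
    (by intros; simp [mul_add])
    (by intros; simp [mul_smul_comm]))

@[simp] lemma h2_tmul (Q : QuasiHopf G) (L : LeftQCoaction G M Q.toQuasiBialg)
    (a : G) (s : G ⊗[ℂ] M) :
    h2 Q L (a ⊗ₜ s) = ((Q.S a) ⊗ₜ[ℂ] (1 : M)) * qLam Q L * s := by simp [h2]

/-- `hpp (a ⊗ s) = s * (S⁻¹(a β) ⊗ 1)` -/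
def hpp (Q : QuasiHopf G) : G ⊗[ℂ] (G ⊗[ℂ] M) →ₗ[ℂ] G ⊗[ℂ] M :=
  TensorProduct.lift (LinearMap.mk₂ ℂ
    (fun a s => s * ((Q.Sinv (a * Q.betaEl)) ⊗ₜ[ℂ] (1 : M)))
    (by intros; simp [add_mul, map_add, add_tmul, mul_add])
    (by intros; simp [smul_mul_assoc, map_smul, ← smul_tmul', mul_smul_comm])
    (by intros; simp [add_mul])
    (by intros; simp [smul_mul_assoc]))

@[simp] lemma hpp_tmul (Q : QuasiHopf G) (a : G) (s : G ⊗[ℂ] M) :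
    hpp Q (a ⊗ₜ s) = s * ((Q.Sinv (a * Q.betaEl)) ⊗ₜ[ℂ] (1 : M)) := by simp [hpp]

/-- `h3 (a ⊗ s) = ((S a * α) ⊗ 1) * s` -/
def h3 (Q : QuasiHopf G) : G ⊗[ℂ] (G ⊗[ℂ] M) →ₗ[ℂ] G ⊗[ℂ] M :=
  TensorProduct.lift (LinearMap.mk₂ ℂ
    (fun a s => ((Q.S a * Q.alphaEl) ⊗ₜ[ℂ] (1 : M)) * s)
    (by intros; simp [map_add, add_mul, add_tmul])
    (by intros; simp [map_smul, smul_mul_assoc, ← smul_tmul'])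
    (by intros; simp [mul_add])
    (by intros; simp [mul_smul_comm]))

@[simp] lemma h3_tmul (Q : QuasiHopf G) (a : G) (s : G ⊗[ℂ] M) :
    h3 Q (a ⊗ₜ s) = ((Q.S a * Q.alphaEl) ⊗ₜ[ℂ] (1 : M)) * s := by simp [h3]

-- algebra homomorphisms

def Lam (Q : QuasiHopf G) (L : LeftQCoaction G M Q.toQuasiBialg) :
    (G ⊗[ℂ] (G ⊗[ℂ] M)) →ₐ[ℂ] G ⊗[ℂ] (G ⊗[ℂ] (G ⊗[ℂ] M)) :=
  Algebra.TensorProduct.map (AlgHom.id ℂ G)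
    (Algebra.TensorProduct.map (AlgHom.id ℂ G) L.lam)

@[simp] lemma Lam_tmul (Q : QuasiHopf G) (L : LeftQCoaction G M Q.toQuasiBialg)
    (a b : G) (n : M) :
    Lam Q L (a ⊗ₜ (b ⊗ₜ n)) = a ⊗ₜ (b ⊗ₜ L.lam n) := by simp [Lam]

def Dh (Q : QuasiHopf G) :
    (G ⊗[ℂ] (G ⊗[ℂ] M)) →ₐ[ℂ] G ⊗[ℂ] (G ⊗[ℂ] (G ⊗[ℂ] M)) :=
  (Algebra.TensorProduct.assoc ℂ ℂ ℂ G G (G ⊗[ℂ] M)).toAlgHom.comp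
    (Algebra.TensorProduct.map Q.comul (AlgHom.id ℂ (G ⊗[ℂ] M)))

@[simp] lemma Dh_tmul (Q : QuasiHopf G) (a : G) (w : G ⊗[ℂ] M) :
    Dh (M := M) Q (a ⊗ₜ w) =
      (Algebra.TensorProduct.assoc ℂ ℂ ℂ G G (G ⊗[ℂ] M)) (Q.comul a ⊗ₜ w) := by
  simp [Dh]

def Ah (Q : QuasiHopf G) :
    (G ⊗[ℂ] (G ⊗[ℂ] M)) →ₐ[ℂ] G ⊗[ℂ] (G ⊗[ℂ] (G ⊗[ℂ] M)) :=
  Algebra.TensorProduct.map (AlgHom.id ℂ G)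
    ((Algebra.TensorProduct.assoc ℂ ℂ ℂ G G M).toAlgHom.comp
      (Algebra.TensorProduct.map Q.comul (AlgHom.id ℂ M)))

@[simp] lemma Ah_tmul (Q : QuasiHopf G) (a b : G) (n : M) :
    Ah Q (a ⊗ₜ (b ⊗ₜ n)) =
      a ⊗ₜ ((Algebra.TensorProduct.assoc ℂ ℂ ℂ G G M) (Q.comul b ⊗ₜ n)) := by
  simp [Ah]

def Bh : (G ⊗[ℂ] (G ⊗[ℂ] G)) →ₐ[ℂ] G ⊗[ℂ] (G ⊗[ℂ] (G ⊗[ℂ] M)) :=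
  (Algebra.TensorProduct.map (AlgHom.id ℂ G)
      (Algebra.TensorProduct.assoc ℂ ℂ ℂ G G M).toAlgHom).comp
    ((Algebra.TensorProduct.assoc ℂ ℂ ℂ G (G ⊗[ℂ] G) M).toAlgHom.comp
      Algebra.TensorProduct.includeLeft)

@[simp] lemma Bh_tmul (x y z : G) :
    (Bh (M := M)) (x ⊗ₜ (y ⊗ₜ z)) = x ⊗ₜ (y ⊗ₜ (z ⊗ₜ (1 : M))) := by
  simp [Bh, Algebra.TensorProduct.includeLeft_apply, Algebra.TensorProduct.assoc_tmul]

def m1 (Q : QuasiHopf G) : (G ⊗[ℂ] (G ⊗[ℂ] M)) →ₐ[ℂ] G ⊗[ℂ] M :=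
  (Algebra.TensorProduct.lid ℂ (G ⊗[ℂ] M)).toAlgHom.comp
    (Algebra.TensorProduct.map Q.counit (AlgHom.id ℂ (G ⊗[ℂ] M)))

@[simp] lemma m1_tmul (Q : QuasiHopf G) (a : G) (w : G ⊗[ℂ] M) :
    m1 Q (a ⊗ₜ w) = Q.counit a • w := by
  simp [m1]

def m2 (Q : QuasiHopf G) : (G ⊗[ℂ] (G ⊗[ℂ] M)) →ₐ[ℂ] G ⊗[ℂ] M :=
  Algebra.TensorProduct.map (AlgHom.id ℂ G)
    ((Algebra.TensorProduct.lid ℂ M).toAlgHom.comp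
      (Algebra.TensorProduct.map Q.counit (AlgHom.id ℂ M)))

@[simp] lemma m2_tmul (Q : QuasiHopf G) (a b : G) (n : M) :
    m2 Q (a ⊗ₜ (b ⊗ₜ n)) = Q.counit b • (a ⊗ₜ n) := by
  simp [m2, tmul_smul]

def iot : (G ⊗[ℂ] M) →ₐ[ℂ] G ⊗[ℂ] (G ⊗[ℂ] (G ⊗[ℂ] M)) :=
  (Algebra.TensorProduct.includeRight :
      (G ⊗[ℂ] (G ⊗[ℂ] M)) →ₐ[ℂ] G ⊗[ℂ] (G ⊗[ℂ] (G ⊗[ℂ] M))).comp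
    (Algebra.TensorProduct.includeRight :
      (G ⊗[ℂ] M) →ₐ[ℂ] G ⊗[ℂ] (G ⊗[ℂ] M))

@[simp] lemma iot_apply (s : G ⊗[ℂ] M) :
    iot s = (1 : G) ⊗ₜ ((1 : G) ⊗ₜ s) := by simp [iot]

def jh : (G ⊗[ℂ] M) →ₐ[ℂ] G ⊗[ℂ] (G ⊗[ℂ] (G ⊗[ℂ] M)) :=
  Algebra.TensorProduct.map (AlgHom.id ℂ G)
    ((Algebra.TensorProduct.includeRight :
        (G ⊗[ℂ] M) →ₐ[ℂ] G ⊗[ℂ] (G ⊗[ℂ] M)).comp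
      (Algebra.TensorProduct.includeRight : M →ₐ[ℂ] G ⊗[ℂ] M))

@[simp] lemma jh_tmul (g : G) (n : M) :
    (jh (g ⊗ₜ n) : G ⊗[ℂ] (G ⊗[ℂ] (G ⊗[ℂ] M))) = g ⊗ₜ ((1 : G) ⊗ₜ ((1 : G) ⊗ₜ n)) := by
  simp [jh]

-- counit lemmas

lemma m1_phiL (Q : QuasiHopf G) (L : LeftQCoaction G M Q.toQuasiBialg) :
    m1 Q L.phiL = 1 := by
  have agree : ∀ x : G ⊗[ℂ] (G ⊗[ℂ] M),
      m1 Q x = (TensorProduct.lid ℂ (G ⊗[ℂ] M))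
        (TensorProduct.map Q.counit.toLinearMap LinearMap.id x) := by
    intro x
    induction x using TensorProduct.induction_on with
    | zero => simp
    | tmul a w => simp
    | add x y hx hy => simp [map_add, hx, hy]
  rw [agree]
  exact L.counit_phiL_left

lemma m1_phiLInv (Q : QuasiHopf G) (L : LeftQCoaction G M Q.toQuasiBialg) :
    m1 Q L.phiLInv = 1 := by
  have h : m1 Q L.phiLInv * m1 Q L.phiL = 1 := by
    rw [← map_mul, L.phiL_inv_mul, map_one]
  rwa [m1_phiL, mul_one] at h

lemma m2_phiL (Q : QuasiHopf G) (L : LeftQCoaction G M Q.toQuasiBialg) :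
    m2 Q L.phiL = 1 := by
  have agree : ∀ x : G ⊗[ℂ] (G ⊗[ℂ] M),
      m2 Q x = TensorProduct.map LinearMap.id
        ((TensorProduct.lid ℂ M).toLinearMap ∘ₗ
          TensorProduct.map Q.counit.toLinearMap LinearMap.id) x := by
    intro x
    induction x using TensorProduct.induction_on with
    | zero => simp
    | tmul a w =>
      induction w using TensorProduct.induction_on with
      | zero => simp
      | tmul b n => simp [tmul_smul]
      | add w1 w2 h1 h2 => simp only [tmul_add, map_add, h1, h2]
    | add x y hx hy => simp [map_add, hx, hy]
  rw [agree]
  exact L.counit_phiL_mid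

lemma m2_phiLInv (Q : QuasiHopf G) (L : LeftQCoaction G M Q.toQuasiBialg) :
    m2 Q L.phiLInv = 1 := by
  have h : m2 Q L.phiLInv * m2 Q L.phiL = 1 := by
    rw [← map_mul, L.phiL_inv_mul, map_one]
  rwa [m2_phiL, mul_one] at h
-- pentagon in AlgHom form

lemma Ah_agree (Q : QuasiHopf G) (x : G ⊗[ℂ] (G ⊗[ℂ] M)) :
    TensorProduct.map LinearMap.id (TensorProduct.assoc ℂ G G M).toLinearMap
        (TensorProduct.map LinearMap.id
          (TensorProduct.map Q.comul.toLinearMap LinearMap.id) x) = Ah Q x := by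
  induction x using TensorProduct.induction_on with
  | zero => simp
  | tmul a w => simp; rfl
  | add x y hx hy => simp [map_add, hx, hy]

lemma Bh_agree (y : G ⊗[ℂ] (G ⊗[ℂ] G)) :
    TensorProduct.map LinearMap.id (TensorProduct.assoc ℂ G G M).toLinearMap
        ((TensorProduct.assoc ℂ G (G ⊗[ℂ] G) M) (y ⊗ₜ[ℂ] (1 : M))) = Bh y := by
  induction y using TensorProduct.induction_on with
  | zero => simp
  | tmul x w =>
    induction w using TensorProduct.induction_on with
    | zero => simp
    | tmul y z => simp
    | add w1 w2 h1 h2 =>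
      simp only [tmul_add, add_tmul, map_add, h1, h2]
  | add x y hx hy => simp [add_tmul, map_add, hx, hy]

lemma Lam_agree (Q : QuasiHopf G) (L : LeftQCoaction G M Q.toQuasiBialg)
    (x : G ⊗[ℂ] (G ⊗[ℂ] M)) :
    TensorProduct.map LinearMap.id
        (TensorProduct.map LinearMap.id L.lam.toLinearMap) x = Lam Q L x := rfl

lemma Dh_agree (Q : QuasiHopf G) (x : G ⊗[ℂ] (G ⊗[ℂ] M)) :
    (TensorProduct.assoc ℂ G G (G ⊗[ℂ] M))
        (TensorProduct.map Q.comul.toLinearMap LinearMap.id x) = Dh Q x := rfl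

lemma pentagon' (Q : QuasiHopf G) (L : LeftQCoaction G M Q.toQuasiBialg) :
    ((1 : G) ⊗ₜ[ℂ] L.phiL) * Ah Q L.phiL * Bh Q.assocEl =
      Lam Q L L.phiL * Dh Q L.phiL := by
  have h := L.pentagon
  rwa [Ah_agree, Bh_agree, Lam_agree, Dh_agree] at h

lemma inv_shuffle {R : Type*} [Monoid R] (u a b c d u' a' b' c' : R)
    (hu : u * u' = 1) (ha : a * a' = 1) (hb : b * b' = 1) (hc : c' * c = 1)
    (h : u * a * b = c * d) : c' = d * (b' * (a' * u')) := by
  have h1 : c * (d * (b' * (a' * u'))) = 1 := by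
    rw [← mul_assoc, ← h]
    rw [mul_assoc (u * a)]
    rw [← mul_assoc b, hb, one_mul]
    rw [mul_assoc u, ← mul_assoc a, ha, one_mul, hu]
  calc c' = c' * (c * (d * (b' * (a' * u')))) := by rw [h1, mul_one]
    _ = (c' * c) * (d * (b' * (a' * u'))) := by rw [mul_assoc]
    _ = d * (b' * (a' * u')) := by rw [hc, one_mul]

lemma inv_shuffle2 {R : Type*} [Monoid R] (u a b c d d' : R)
    (hd : d * d' = 1) (h : u * a * b = c * d) : c = u * a * b * d' := by
  calc c = c * (d * d') := by rw [hd, mul_one]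
    _ = (c * d) * d' := by rw [← mul_assoc]
    _ = u * a * b * d' := by rw [h]

lemma stepB1 (Q : QuasiHopf G) (L : LeftQCoaction G M Q.toQuasiBialg) :
    Lam Q L L.phiLInv =
      Dh Q L.phiL * (Bh Q.assocElInv * (Ah Q L.phiLInv * ((1 : G) ⊗ₜ[ℂ] L.phiLInv))) := by
  have hu : ((1 : G) ⊗ₜ[ℂ] L.phiL) * ((1 : G) ⊗ₜ[ℂ] L.phiLInv) = 1 := by
    rw [Algebra.TensorProduct.tmul_mul_tmul, L.phiL_mul_inv, mul_one]
    exact Algebra.TensorProduct.one_def.symm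
  have hA : Ah Q L.phiL * Ah Q L.phiLInv = 1 := by
    rw [← map_mul, L.phiL_mul_inv]; exact (Ah Q).map_one'
  have hB : Bh Q.assocEl * (Bh Q.assocElInv : G ⊗[ℂ] (G ⊗[ℂ] (G ⊗[ℂ] M))) = 1 := by
    rw [← map_mul, Q.assocEl_mul_inv]; exact (Bh (M := M)).map_one'
  have hC : Lam Q L L.phiLInv * Lam Q L L.phiL = 1 := by
    rw [← map_mul, L.phiL_inv_mul]; exact (Lam Q L).map_one'
  exact inv_shuffle ((1 : G) ⊗ₜ[ℂ] L.phiL) (Ah Q L.phiL) (Bh Q.assocEl)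
    (Lam Q L L.phiL) (Dh Q L.phiL) ((1 : G) ⊗ₜ[ℂ] L.phiLInv) (Ah Q L.phiLInv)
    (Bh Q.assocElInv) (Lam Q L L.phiLInv) hu hA hB hC (pentagon' Q L)

lemma stepB2 (Q : QuasiHopf G) (L : LeftQCoaction G M Q.toQuasiBialg) :
    Lam Q L L.phiL =
      ((1 : G) ⊗ₜ[ℂ] L.phiL) * Ah Q L.phiL * Bh Q.assocEl * Dh Q L.phiLInv := by
  have hD : Dh Q L.phiL * (Dh Q L.phiLInv : G ⊗[ℂ] (G ⊗[ℂ] (G ⊗[ℂ] M))) = 1 := by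
    rw [← map_mul, L.phiL_mul_inv]; exact (Dh Q).map_one'
  exact inv_shuffle2 ((1 : G) ⊗ₜ[ℂ] L.phiL) (Ah Q L.phiL) (Bh Q.assocEl)
    (Lam Q L L.phiL) (Dh Q L.phiL) (Dh Q L.phiLInv) hD (pentagon' Q L)
-- specialized one-lemmas (the generic ones fail to match the tensor `1` syntactically)

@[simp] lemma mul_one_A2 (x : G ⊗[ℂ] M) : x * 1 = x := mul_one x
@[simp] lemma one_mul_A2 (x : G ⊗[ℂ] M) : 1 * x = x := one_mul x
@[simp] lemma mul_one_A3 (x : G ⊗[ℂ] (G ⊗[ℂ] M)) : x * 1 = x := mul_one x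
@[simp] lemma one_mul_A3 (x : G ⊗[ℂ] (G ⊗[ℂ] M)) : 1 * x = x := one_mul x
@[simp] lemma mul_one_A4 (x : G ⊗[ℂ] (G ⊗[ℂ] (G ⊗[ℂ] M))) : x * 1 = x := mul_one x
@[simp] lemma one_mul_A4 (x : G ⊗[ℂ] (G ⊗[ℂ] (G ⊗[ℂ] M))) : 1 * x = x := one_mul x

-- the linear maps underlying pLam and qLam

def pF (Q : QuasiHopf G) : G ⊗[ℂ] (G ⊗[ℂ] M) →ₗ[ℂ] G ⊗[ℂ] M :=
  TensorProduct.map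
    (LinearMap.mul' ℂ G ∘ₗ
      TensorProduct.map LinearMap.id (Q.Sinv ∘ₗ LinearMap.mulRight ℂ Q.betaEl) ∘ₗ
      (TensorProduct.comm ℂ G G).toLinearMap)
    LinearMap.id ∘ₗ (TensorProduct.assoc ℂ G G M).symm.toLinearMap

lemma pF_phiL (Q : QuasiHopf G) (L : LeftQCoaction G M Q.toQuasiBialg) :
    pF Q L.phiL = pLam Q L := rfl

@[simp] lemma pF_tmul (Q : QuasiHopf G) (x y : G) (n : M) :
    pF Q (x ⊗ₜ (y ⊗ₜ n)) = (y * Q.Sinv (x * Q.betaEl)) ⊗ₜ n := by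
  simp [pF]

def qF (Q : QuasiHopf G) : G ⊗[ℂ] (G ⊗[ℂ] M) →ₗ[ℂ] G ⊗[ℂ] M :=
  TensorProduct.map
    (LinearMap.mul' ℂ G ∘ₗ
      TensorProduct.map (LinearMap.mulRight ℂ Q.alphaEl ∘ₗ Q.S) LinearMap.id)
    LinearMap.id ∘ₗ (TensorProduct.assoc ℂ G G M).symm.toLinearMap

lemma qF_phiLInv (Q : QuasiHopf G) (L : LeftQCoaction G M Q.toQuasiBialg) :
    qF Q L.phiLInv = qLam Q L := rfl

@[simp] lemma qF_tmul (Q : QuasiHopf G) (x y : G) (n : M) :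
    qF Q (x ⊗ₜ (y ⊗ₜ n)) = (Q.S x * Q.alphaEl * y) ⊗ₜ n := by
  simp [qF]

-- evaluation of thetaP, thetaQ on pure tensors

@[simp] lemma thetaP_tmul (Q : QuasiHopf G) (L : LeftQCoaction G M Q.toQuasiBialg)
    (t : G ⊗[ℂ] M) (x : G) (n : M) :
    thetaP Q L t (x ⊗ₜ n) = L.lam n * t * ((Q.Sinv x) ⊗ₜ (1 : M)) := by
  simp [thetaP]

@[simp] lemma thetaQ_tmul (Q : QuasiHopf G) (L : LeftQCoaction G M Q.toQuasiBialg)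
    (t : G ⊗[ℂ] M) (x : G) (n : M) :
    thetaQ Q L t (x ⊗ₜ n) = ((Q.S x) ⊗ₜ (1 : M)) * t * L.lam n := by
  simp [thetaQ]

-- Step A

lemma stepA1 (Q : QuasiHopf G) (L : LeftQCoaction G M Q.toQuasiBialg) :
    thetaP Q L (pLam Q L) (qLam Q L) = Tg Q (pLam Q L) (Lam Q L L.phiLInv) := by
  rw [← qF_phiLInv]
  generalize L.phiLInv = t
  induction t using TensorProduct.induction_on with
  | zero => simp
  | tmul a w =>
    induction w using TensorProduct.induction_on with
    | zero => simp
    | tmul b n => simp [Sinv_mul, Q.Sinv_S, mul_assoc]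
    | add w1 w2 h1 h2 => simp only [tmul_add, map_add, h1, h2]
  | add t1 t2 h1 h2 => simp only [map_add, h1, h2]

lemma stepA2 (Q : QuasiHopf G) (L : LeftQCoaction G M Q.toQuasiBialg) :
    thetaQ Q L (qLam Q L) (pLam Q L) = T'g Q (qLam Q L) (Lam Q L L.phiL) := by
  rw [← pF_phiL]
  generalize L.phiL = t
  induction t using TensorProduct.induction_on with
  | zero => simp
  | tmul a w =>
    induction w using TensorProduct.induction_on with
    | zero => simp
    | tmul b n => simp [Q.S_mul, Q.S_Sinv, mul_assoc]
    | add w1 w2 h1 h2 => simp only [tmul_add, map_add, h1, h2]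
  | add t1 t2 h1 h2 => simp only [map_add, h1, h2]
-- K-lemmas

lemma h1_eq_hpp (Q : QuasiHopf G) (L : LeftQCoaction G M Q.toQuasiBialg) :
    ∀ t : G ⊗[ℂ] (G ⊗[ℂ] M), h1 Q L t = hpp Q (t * L.phiL) := by
  intro t
  induction t using TensorProduct.induction_on with
  | zero => simp
  | tmul a w =>
    have key : ∀ v : G ⊗[ℂ] (G ⊗[ℂ] M),
        w * pF Q v * ((Q.Sinv a) ⊗ₜ[ℂ] (1 : M)) = hpp Q ((a ⊗ₜ w) * v) := by
      intro v
      induction v using TensorProduct.induction_on with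
      | zero => simp
      | tmul x r =>
        induction r using TensorProduct.induction_on with
        | zero => simp
        | tmul y n =>
          induction w using TensorProduct.induction_on with
          | zero => simp
          | tmul g m =>
            simp [Algebra.TensorProduct.tmul_mul_tmul, Sinv_mul, ← mul_assoc]
          | add w1 w2 hw1 hw2 =>
            simp only [tmul_add, add_tmul, map_add, mul_add, add_mul, hw1, hw2]
        | add r1 r2 h1 h2 => simp only [tmul_add, add_tmul, map_add, mul_add, add_mul, h1, h2]
      | add v1 v2 h1 h2 => simp only [tmul_add, add_tmul, map_add, mul_add, add_mul, h1, h2]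
    rw [h1_tmul, ← pF_phiL]
    exact key L.phiL
  | add t1 t2 h1 h2 => simp only [tmul_add, add_tmul, map_add, mul_add, add_mul, h1, h2]

lemma h1_phiLInv (Q : QuasiHopf G) (L : LeftQCoaction G M Q.toQuasiBialg) :
    h1 Q L L.phiLInv = (Q.Sinv Q.betaEl) ⊗ₜ[ℂ] (1 : M) := by
  rw [h1_eq_hpp Q L L.phiLInv, L.phiL_inv_mul, Algebra.TensorProduct.one_def, hpp_tmul,
    one_mul Q.betaEl]
  exact one_mul_A2 _

lemma h2_eq_h3 (Q : QuasiHopf G) (L : LeftQCoaction G M Q.toQuasiBialg) :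
    ∀ t : G ⊗[ℂ] (G ⊗[ℂ] M), h2 Q L t = h3 Q (L.phiLInv * t) := by
  intro t
  induction t using TensorProduct.induction_on with
  | zero => simp
  | tmul x r =>
    have key : ∀ v : G ⊗[ℂ] (G ⊗[ℂ] M),
        ((Q.S x) ⊗ₜ[ℂ] (1 : M)) * qF Q v * r = h3 Q (v * (x ⊗ₜ r)) := by
      intro v
      induction v using TensorProduct.induction_on with
      | zero => simp
      | tmul a w =>
        induction w using TensorProduct.induction_on with
        | zero => simp
        | tmul b n =>
          induction r using TensorProduct.induction_on with
          | zero => simp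
          | tmul g m =>
            simp [Algebra.TensorProduct.tmul_mul_tmul, Q.S_mul, ← mul_assoc]
          | add r1 r2 h1 h2 => simp only [tmul_add, add_tmul, map_add, mul_add, add_mul, h1, h2]
        | add w1 w2 h1 h2 => simp only [tmul_add, add_tmul, map_add, mul_add, add_mul, h1, h2]
      | add v1 v2 h1 h2 => simp only [tmul_add, add_tmul, map_add, mul_add, add_mul, h1, h2]
    rw [h2_tmul, ← qF_phiLInv]
    exact key L.phiLInv
  | add t1 t2 h1 h2 => simp only [tmul_add, add_tmul, map_add, mul_add, add_mul, h1, h2]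

lemma h2_phiL (Q : QuasiHopf G) (L : LeftQCoaction G M Q.toQuasiBialg) :
    h2 Q L L.phiL = Q.alphaEl ⊗ₜ[ℂ] (1 : M) := by
  rw [h2_eq_h3 Q L L.phiL, L.phiL_inv_mul, Algebra.TensorProduct.one_def, h3_tmul,
    Q.S_one, one_mul Q.alphaEl]
  exact mul_one_A2 _
def w0 (Q : QuasiHopf G) : G ⊗[ℂ] (G ⊗[ℂ] (G ⊗[ℂ] M)) :=
  (1 : G) ⊗ₜ ((1 : G) ⊗ₜ ((Q.Sinv Q.betaEl) ⊗ₜ (1 : M)))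

lemma stepC1 (Q : QuasiHopf G) (u : G ⊗[ℂ] M) :
    ∀ (t : G ⊗[ℂ] (G ⊗[ℂ] M)) (v : G ⊗[ℂ] (G ⊗[ℂ] (G ⊗[ℂ] M))),
      Tg Q u (Dh Q t * v) = Tg Q u (iot (m1 Q t) * v) := by
  intro t
  induction t using TensorProduct.induction_on with
  | zero => intro v; simp
  | tmul a w =>
    intro v
    induction v using TensorProduct.induction_on with
    | zero => simp
    | tmul c r =>
      induction r using TensorProduct.induction_on with
      | zero => simp
      | tmul d s =>
        have key : ∀ z : G ⊗[ℂ] G,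
            Tg Q u ((Algebra.TensorProduct.assoc ℂ ℂ ℂ G G (G ⊗[ℂ] M)) (z ⊗ₜ w) *
                (c ⊗ₜ (d ⊗ₜ s))) =
              w * s * u * ((Q.Sinv d * k1 Q z * c) ⊗ₜ[ℂ] (1 : M)) := by
          intro z
          induction z using TensorProduct.induction_on with
          | zero => simp
          | tmul x y =>
            simp [Algebra.TensorProduct.assoc_tmul, Algebra.TensorProduct.tmul_mul_tmul,
              Sinv_mul, mul_assoc]
          | add z1 z2 h1 h2 =>
            simp only [tmul_add, add_tmul, map_add, mul_add, add_mul, mul_add_A2, add_mul_A2, mul_add_A3, add_mul_A3, mul_add_A4, add_mul_A4, h1, h2]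
        rw [Dh_tmul, key (Q.comul a), k1_comul]
        simp [Algebra.TensorProduct.tmul_mul_tmul, ← smul_tmul', tmul_smul,
          smul_mul_assoc, mul_smul_comm, mul_assoc]
      | add r1 r2 h1 h2 => simp only [tmul_add, map_add, mul_add_A2, mul_add_A3, mul_add_A4, mul_add, h1, h2]
    | add v1 v2 h1 h2 => simp only [map_add, mul_add_A2, mul_add_A3, mul_add_A4, h1, h2]
  | add t1 t2 h1 h2 => intro v; simp only [map_add, add_mul_A4, h1 v, h2 v]

lemma stepD1 (Q : QuasiHopf G) (L : LeftQCoaction G M Q.toQuasiBialg) :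
    ∀ ww : G ⊗[ℂ] (G ⊗[ℂ] (G ⊗[ℂ] M)),
      Tg Q (pLam Q L) (ww * ((1 : G) ⊗ₜ[ℂ] L.phiLInv)) = Tg Q 1 (ww * w0 Q) := by
  intro ww
  induction ww using TensorProduct.induction_on with
  | zero => simp
  | tmul a r =>
    induction r using TensorProduct.induction_on with
    | zero => simp
    | tmul b s =>
      have key : ∀ v : G ⊗[ℂ] (G ⊗[ℂ] M),
          Tg Q (pLam Q L) (a ⊗ₜ ((b ⊗ₜ s) * v)) =
            s * h1 Q L v * ((Q.Sinv b * Q.Sinv Q.alphaEl * a) ⊗ₜ[ℂ] (1 : M)) := by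
        intro v
        induction v using TensorProduct.induction_on with
        | zero => simp
        | tmul x r' =>
          simp [Algebra.TensorProduct.tmul_mul_tmul, Sinv_mul, mul_assoc]
        | add v1 v2 h1 h2 => simp only [tmul_add, map_add, mul_add, add_mul, mul_add_A2, add_mul_A2, mul_add_A3, add_mul_A3, mul_add_A4, add_mul_A4, h1, h2]
      rw [Algebra.TensorProduct.tmul_mul_tmul, mul_one a, key L.phiLInv, h1_phiLInv]
      simp [w0, Algebra.TensorProduct.tmul_mul_tmul, mul_assoc]
    | add r1 r2 h1 h2 => simp only [tmul_add, add_tmul, map_add, mul_add, add_mul, mul_add_A2, add_mul_A2, mul_add_A3, add_mul_A3, mul_add_A4, add_mul_A4, h1, h2]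
  | add w1 w2 h1 h2 => simp only [map_add, add_mul_A4, add_mul_A3, add_mul_A2, h1, h2]

lemma stepC2 (Q : QuasiHopf G) :
    ∀ (v : G ⊗[ℂ] (G ⊗[ℂ] (G ⊗[ℂ] M))) (t : G ⊗[ℂ] (G ⊗[ℂ] M)),
      Tg Q 1 (v * Ah Q t * w0 Q) = Tg Q 1 (v * w0 Q) * m2 Q t := by
  intro v
  induction v using TensorProduct.induction_on with
  | zero => intro t; simp
  | tmul c r =>
    induction r using TensorProduct.induction_on with
    | zero => intro t; simp
    | tmul d s =>
      intro t
      induction t using TensorProduct.induction_on with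
      | zero => simp
      | tmul a w =>
        induction w using TensorProduct.induction_on with
        | zero => simp
        | tmul b n =>
          have key : ∀ z : G ⊗[ℂ] G,
              Tg Q 1 ((c ⊗ₜ (d ⊗ₜ s)) *
                  (a ⊗ₜ ((Algebra.TensorProduct.assoc ℂ ℂ ℂ G G M) (z ⊗ₜ n))) * w0 Q) =
                s * ((k2 Q z * (Q.Sinv d * Q.Sinv Q.alphaEl * c) * a) ⊗ₜ[ℂ] n) := by
            intro z
            induction z using TensorProduct.induction_on with
            | zero => simp
            | tmul x y =>
              simp [w0, Algebra.TensorProduct.assoc_tmul,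
                Algebra.TensorProduct.tmul_mul_tmul, Sinv_mul, mul_assoc]
            | add z1 z2 h1 h2 =>
              simp only [tmul_add, add_tmul, map_add, mul_add, add_mul, mul_add_A2, add_mul_A2, mul_add_A3, add_mul_A3, mul_add_A4, add_mul_A4, h1, h2]
          rw [Ah_tmul, key (Q.comul b), k2_comul]
          simp [w0, Algebra.TensorProduct.tmul_mul_tmul, ← smul_tmul', tmul_smul,
            smul_mul_assoc, mul_smul_comm, mul_assoc]
        | add w1 w2 h1 h2 => simp only [tmul_add, map_add, mul_add, add_mul, mul_add_A2, add_mul_A2, mul_add_A3, add_mul_A3, mul_add_A4, add_mul_A4, h1, h2]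
      | add t1 t2 h1 h2 => simp only [map_add, mul_add, add_mul, mul_add_A2, add_mul_A2, mul_add_A3, add_mul_A3, mul_add_A4, add_mul_A4, h1, h2]
    | add r1 r2 h1 h2 =>
      intro t
      simp only [tmul_add, add_tmul, map_add, mul_add, add_mul, mul_add_A2, add_mul_A2, mul_add_A3, add_mul_A3, mul_add_A4, add_mul_A4, h1 t, h2 t]
  | add v1 v2 h1 h2 =>
    intro t
    simp only [map_add, mul_add, add_mul, mul_add_A2, add_mul_A2, mul_add_A3, add_mul_A3, mul_add_A4, add_mul_A4, h1 t, h2 t]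

lemma stepD3 (Q : QuasiHopf G) :
    ∀ y : G ⊗[ℂ] (G ⊗[ℂ] G),
      Tg Q 1 ((Bh y : G ⊗[ℂ] (G ⊗[ℂ] (G ⊗[ℂ] M))) * w0 Q) = (k3 Q y) ⊗ₜ[ℂ] (1 : M) := by
  intro y
  induction y using TensorProduct.induction_on with
  | zero => simp
  | tmul x w =>
    induction w using TensorProduct.induction_on with
    | zero => simp
    | tmul yy z =>
      simp [w0, Algebra.TensorProduct.tmul_mul_tmul, mul_assoc]
    | add w1 w2 h1 h2 =>
      simp only [tmul_add, add_tmul, map_add, mul_add, add_mul, mul_add_A2, add_mul_A2, mul_add_A3, add_mul_A3, mul_add_A4, add_mul_A4, h1, h2]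
  | add y1 y2 h1 h2 => simp only [map_add, add_mul_A4, add_mul_A2, add_tmul, h1, h2]

lemma stepC1' (Q : QuasiHopf G) (L : LeftQCoaction G M Q.toQuasiBialg) :
    ∀ v : G ⊗[ℂ] (G ⊗[ℂ] (G ⊗[ℂ] M)),
      T'g Q (qLam Q L) (((1 : G) ⊗ₜ[ℂ] L.phiL) * v) =
        T'g Q (Q.alphaEl ⊗ₜ[ℂ] (1 : M)) v := by
  intro v
  induction v using TensorProduct.induction_on with
  | zero => simp
  | tmul a r =>
    induction r using TensorProduct.induction_on with
    | zero => simp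
    | tmul b s =>
      have key : ∀ uu : G ⊗[ℂ] (G ⊗[ℂ] M),
          T'g Q (qLam Q L) (a ⊗ₜ (uu * (b ⊗ₜ s))) =
            ((a * Q.betaEl * Q.S b) ⊗ₜ[ℂ] (1 : M)) * h2 Q L uu * s := by
        intro uu
        induction uu using TensorProduct.induction_on with
        | zero => simp
        | tmul x r' =>
          simp [Algebra.TensorProduct.tmul_mul_tmul, Q.S_mul, ← mul_assoc]
        | add u1 u2 h1 h2 => simp only [tmul_add, map_add, mul_add, add_mul, mul_add_A2, add_mul_A2, mul_add_A3, add_mul_A3, mul_add_A4, add_mul_A4, h1, h2]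
      rw [Algebra.TensorProduct.tmul_mul_tmul, one_mul a, key L.phiL, h2_phiL]
      simp [mul_assoc]
    | add r1 r2 h1 h2 => simp only [tmul_add, map_add, mul_add, add_mul, mul_add_A2, add_mul_A2, mul_add_A3, add_mul_A3, mul_add_A4, add_mul_A4, h1, h2]
  | add v1 v2 h1 h2 => simp only [map_add, mul_add_A2, mul_add_A3, mul_add_A4, h1, h2]

lemma stepC2' (Q : QuasiHopf G) :
    ∀ (t : G ⊗[ℂ] (G ⊗[ℂ] M)) (v : G ⊗[ℂ] (G ⊗[ℂ] (G ⊗[ℂ] M))),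
      T'g Q (Q.alphaEl ⊗ₜ[ℂ] (1 : M)) (Ah Q t * v) =
        T'g Q (Q.alphaEl ⊗ₜ[ℂ] (1 : M)) ((jh (m2 Q t) : G ⊗[ℂ] (G ⊗[ℂ] (G ⊗[ℂ] M))) * v) := by
  intro t
  induction t using TensorProduct.induction_on with
  | zero => intro v; simp
  | tmul a w =>
    intro v
    induction v using TensorProduct.induction_on with
    | zero => simp
    | tmul c r =>
      induction r using TensorProduct.induction_on with
      | zero => simp
      | tmul d s =>
        induction w using TensorProduct.induction_on with
        | zero => simp
        | tmul b n =>
          have key : ∀ z : G ⊗[ℂ] G,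
              T'g Q (Q.alphaEl ⊗ₜ[ℂ] (1 : M))
                  ((a ⊗ₜ ((Algebra.TensorProduct.assoc ℂ ℂ ℂ G G M) (z ⊗ₜ n))) *
                    (c ⊗ₜ (d ⊗ₜ s))) =
                ((a * c * Q.betaEl * Q.S d) ⊗ₜ[ℂ] (1 : M)) * (((k5 Q z) ⊗ₜ[ℂ] n) * s) := by
            intro z
            induction z using TensorProduct.induction_on with
            | zero => simp
            | tmul x y =>
              simp [Algebra.TensorProduct.assoc_tmul,
                Algebra.TensorProduct.tmul_mul_tmul, Q.S_mul, ← mul_assoc]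
            | add z1 z2 h1 h2 =>
              simp only [tmul_add, add_tmul, map_add, mul_add, add_mul, mul_add_A2, add_mul_A2, mul_add_A3, add_mul_A3, mul_add_A4, add_mul_A4, h1, h2]
          rw [Ah_tmul, key (Q.comul b), k5_comul]
          simp [Algebra.TensorProduct.tmul_mul_tmul, ← smul_tmul', tmul_smul,
            smul_mul_assoc, mul_smul_comm, ← mul_assoc]
        | add w1 w2 h1 h2 => simp only [tmul_add, map_add, mul_add, add_mul, mul_add_A2, add_mul_A2, mul_add_A3, add_mul_A3, mul_add_A4, add_mul_A4, h1, h2]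
      | add r1 r2 h1 h2 => simp only [tmul_add, map_add, mul_add, add_mul, mul_add_A2, add_mul_A2, mul_add_A3, add_mul_A3, mul_add_A4, add_mul_A4, h1, h2]
    | add v1 v2 h1 h2 => simp only [map_add, mul_add_A2, mul_add_A3, mul_add_A4, h1, h2]
  | add t1 t2 h1 h2 => intro v; simp only [map_add, add_mul_A4, h1 v, h2 v]

lemma stepC3' (Q : QuasiHopf G) (u : G ⊗[ℂ] M) :
    ∀ (v : G ⊗[ℂ] (G ⊗[ℂ] (G ⊗[ℂ] M))) (t : G ⊗[ℂ] (G ⊗[ℂ] M)),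
      T'g Q u (v * Dh Q t) = T'g Q u (v * iot (m1 Q t)) := by
  intro v
  induction v using TensorProduct.induction_on with
  | zero => intro t; simp
  | tmul c r =>
    induction r using TensorProduct.induction_on with
    | zero => intro t; simp
    | tmul d s =>
      intro t
      induction t using TensorProduct.induction_on with
      | zero => simp
      | tmul a w =>
        have key : ∀ z : G ⊗[ℂ] G,
            T'g Q u ((c ⊗ₜ (d ⊗ₜ s)) *
                (Algebra.TensorProduct.assoc ℂ ℂ ℂ G G (G ⊗[ℂ] M)) (z ⊗ₜ w)) =
              ((c * k6 Q z * Q.S d) ⊗ₜ[ℂ] (1 : M)) * u * (s * w) := by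
          intro z
          induction z using TensorProduct.induction_on with
          | zero => simp
          | tmul x y =>
            simp [Algebra.TensorProduct.assoc_tmul,
              Algebra.TensorProduct.tmul_mul_tmul, Q.S_mul, ← mul_assoc]
          | add z1 z2 h1 h2 =>
            simp only [tmul_add, add_tmul, map_add, mul_add, add_mul, mul_add_A2, add_mul_A2, mul_add_A3, add_mul_A3, mul_add_A4, add_mul_A4, h1, h2]
        rw [Dh_tmul, key (Q.comul a), k6_comul]
        simp [Algebra.TensorProduct.tmul_mul_tmul, ← smul_tmul', tmul_smul,
          smul_mul_assoc, mul_smul_comm, ← mul_assoc]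
      | add t1 t2 h1 h2 => simp only [map_add, mul_add_A2, mul_add_A3, mul_add_A4, h1, h2]
    | add r1 r2 h1 h2 =>
      intro t
      simp only [tmul_add, add_tmul, map_add, mul_add, add_mul, mul_add_A2, add_mul_A2, mul_add_A3, add_mul_A3, mul_add_A4, add_mul_A4, h1 t, h2 t]
  | add v1 v2 h1 h2 =>
    intro t
    simp only [map_add, mul_add, add_mul, mul_add_A2, add_mul_A2, mul_add_A3, add_mul_A3, mul_add_A4, add_mul_A4, h1 t, h2 t]

lemma stepD3' (Q : QuasiHopf G) :
    ∀ y : G ⊗[ℂ] (G ⊗[ℂ] G),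
      T'g Q (Q.alphaEl ⊗ₜ[ℂ] (1 : M)) (Bh y) = (k4 Q y) ⊗ₜ[ℂ] (1 : M) := by
  intro y
  induction y using TensorProduct.induction_on with
  | zero => simp
  | tmul x w =>
    induction w using TensorProduct.induction_on with
    | zero => simp
    | tmul yy z =>
      simp [Algebra.TensorProduct.tmul_mul_tmul, ← mul_assoc]
    | add w1 w2 h1 h2 =>
      simp only [tmul_add, add_tmul, map_add, mul_add, add_mul, mul_add_A2, add_mul_A2, mul_add_A3, add_mul_A3, mul_add_A4, add_mul_A4, h1, h2]
  | add y1 y2 h1 h2 => simp only [map_add, add_mul_A4, add_mul_A2, add_tmul, h1, h2]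
set_option maxHeartbeats 4000000

lemma final1 (Q : QuasiHopf G) (L : LeftQCoaction G M Q.toQuasiBialg) :
    thetaP Q L (pLam Q L) (qLam Q L) = (1 : G ⊗[ℂ] M) := by
  calc thetaP Q L (pLam Q L) (qLam Q L)
      = St16.Tg Q (pLam Q L) (St16.Lam Q L L.phiLInv) := St16.stepA1 Q L
    _ = St16.Tg Q (pLam Q L) (St16.Dh Q L.phiL * (St16.Bh Q.assocElInv *
          (St16.Ah Q L.phiLInv * ((1 : G) ⊗ₜ[ℂ] L.phiLInv)))) := by
        rw [St16.stepB1 Q L]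
    _ = St16.Tg Q (pLam Q L) (St16.iot (St16.m1 Q L.phiL) * (St16.Bh Q.assocElInv *
          (St16.Ah Q L.phiLInv * ((1 : G) ⊗ₜ[ℂ] L.phiLInv)))) :=
        St16.stepC1 Q (pLam Q L) L.phiL _
    _ = St16.Tg Q (pLam Q L) (St16.Bh Q.assocElInv *
          (St16.Ah Q L.phiLInv * ((1 : G) ⊗ₜ[ℂ] L.phiLInv))) := by
        rw [St16.m1_phiL Q L, show (St16.iot (1 : G ⊗[ℂ] M) : G ⊗[ℂ] (G ⊗[ℂ] (G ⊗[ℂ] M))) = 1 from St16.iot.map_one']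
        exact congrArg (St16.Tg Q (pLam Q L)) (St16.one_mul_A4 _)
    _ = St16.Tg Q (pLam Q L) ((St16.Bh Q.assocElInv * St16.Ah Q L.phiLInv) *
          ((1 : G) ⊗ₜ[ℂ] L.phiLInv)) :=
        congrArg (St16.Tg Q (pLam Q L))
          (mul_assoc (St16.Bh Q.assocElInv) (St16.Ah Q L.phiLInv) _).symm
    _ = St16.Tg Q 1 ((St16.Bh Q.assocElInv * St16.Ah Q L.phiLInv) * St16.w0 Q) :=
        St16.stepD1 Q L _
    _ = St16.Tg Q 1 (St16.Bh Q.assocElInv * St16.w0 Q) * St16.m2 Q L.phiLInv :=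
        St16.stepC2 Q (St16.Bh Q.assocElInv) L.phiLInv
    _ = St16.Tg Q 1 (St16.Bh Q.assocElInv * St16.w0 Q) := by
        rw [St16.m2_phiLInv Q L]
        exact St16.mul_one_A2 _
    _ = St16.k3 Q Q.assocElInv ⊗ₜ[ℂ] (1 : M) := St16.stepD3 Q Q.assocElInv
    _ = (1 : G) ⊗ₜ[ℂ] (1 : M) := by rw [St16.k3_assocElInv]
    _ = 1 := Algebra.TensorProduct.one_def.symm

lemma final2 (Q : QuasiHopf G) (L : LeftQCoaction G M Q.toQuasiBialg) :
    thetaQ Q L (qLam Q L) (pLam Q L) = (1 : G ⊗[ℂ] M) := by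
  calc thetaQ Q L (qLam Q L) (pLam Q L)
      = St16.T'g Q (qLam Q L) (St16.Lam Q L L.phiL) := St16.stepA2 Q L
    _ = St16.T'g Q (qLam Q L) (((1 : G) ⊗ₜ[ℂ] L.phiL) * St16.Ah Q L.phiL *
          St16.Bh Q.assocEl * St16.Dh Q L.phiLInv) := by
        rw [St16.stepB2 Q L]
    _ = St16.T'g Q (qLam Q L) (((1 : G) ⊗ₜ[ℂ] L.phiL) *
          (St16.Ah Q L.phiL * (St16.Bh Q.assocEl * St16.Dh Q L.phiLInv))) :=
        congrArg (St16.T'g Q (qLam Q L)) (by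
          rw [mul_assoc (((1 : G) ⊗ₜ[ℂ] L.phiL) * St16.Ah Q L.phiL),
            mul_assoc ((1 : G) ⊗ₜ[ℂ] L.phiL)])
    _ = St16.T'g Q (Q.alphaEl ⊗ₜ[ℂ] (1 : M))
          (St16.Ah Q L.phiL * (St16.Bh Q.assocEl * St16.Dh Q L.phiLInv)) :=
        St16.stepC1' Q L _
    _ = St16.T'g Q (Q.alphaEl ⊗ₜ[ℂ] (1 : M))
          (St16.jh (St16.m2 Q L.phiL) * (St16.Bh Q.assocEl * St16.Dh Q L.phiLInv)) :=
        St16.stepC2' Q L.phiL _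
    _ = St16.T'g Q (Q.alphaEl ⊗ₜ[ℂ] (1 : M))
          (St16.Bh Q.assocEl * St16.Dh Q L.phiLInv) := by
        rw [St16.m2_phiL Q L, show (St16.jh (1 : G ⊗[ℂ] M) : G ⊗[ℂ] (G ⊗[ℂ] (G ⊗[ℂ] M))) = 1 from St16.jh.map_one']
        exact congrArg (St16.T'g Q (Q.alphaEl ⊗ₜ[ℂ] (1 : M))) (St16.one_mul_A4 _)
    _ = St16.T'g Q (Q.alphaEl ⊗ₜ[ℂ] (1 : M))
          (St16.Bh Q.assocEl * St16.iot (St16.m1 Q L.phiLInv)) :=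
        St16.stepC3' Q (Q.alphaEl ⊗ₜ[ℂ] (1 : M)) (St16.Bh Q.assocEl) L.phiLInv
    _ = St16.T'g Q (Q.alphaEl ⊗ₜ[ℂ] (1 : M)) (St16.Bh Q.assocEl) := by
        rw [St16.m1_phiLInv Q L, show (St16.iot (1 : G ⊗[ℂ] M) : G ⊗[ℂ] (G ⊗[ℂ] (G ⊗[ℂ] M))) = 1 from St16.iot.map_one']
        exact congrArg (St16.T'g Q (Q.alphaEl ⊗ₜ[ℂ] (1 : M))) (St16.mul_one_A4 _)
    _ = St16.k4 Q Q.assocEl ⊗ₜ[ℂ] (1 : M) := St16.stepD3' Q Q.assocEl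
    _ = (1 : G) ⊗ₜ[ℂ] (1 : M) := by rw [St16.k4_assocEl]
    _ = 1 := Algebra.TensorProduct.one_def.symm
end St16
/-- Let `(λ, φ_λ)` be a left coaction of a quasi-Hopf algebra `G` on `M`,
with `p_λ = φ_λ² S⁻¹(φ_λ¹ β) ⊗ φ_λ³` and `q_λ = S(φ̄_λ¹) α φ̄_λ² ⊗ φ̄_λ³`, written
`q_λ = q_λ¹ ⊗ q_λ²` and `p_λ = p_λ¹ ⊗ p_λ²`.  Then the rigidity identities hold:
`λ(q_λ²)·p_λ·(S⁻¹(q_λ¹) ⊗ 1_M) = 1_G ⊗ 1_M` and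
`(S(p_λ¹) ⊗ 1_M)·q_λ·λ(p_λ²) = 1_G ⊗ 1_M`. -/
theorem statement16
    (Q : QuasiHopf G) (L : LeftQCoaction G M Q.toQuasiBialg) :
    thetaP Q L (pLam Q L) (qLam Q L) = (1 : G ⊗[ℂ] M) ∧
    thetaQ Q L (qLam Q L) (pLam Q L) = (1 : G ⊗[ℂ] M) :=
  ⟨St16.final1 Q L, St16.final2 Q L⟩
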